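/- For x ≥ 0 the principal Lambert W function W₀ satisfies: W₀ is strictly increasing, W₀(0) = 0, and, where I_s > 0, V_T > 0, R > 0, the function i(j) = (j + I_s) − (V_T/R)·W₀((I_s·R/V_T)·e^{(R/V_T)(j + I_s)}) is 1-Lipschitz on [0, ∞), i.e., |i(j₁) − i(j₂)| ≤ |j₁ − j₂| for all j₁, j₂ ≥ 0. -/
import Mathlib


/-- Principal branch of the Lambert W function on `[0, ∞)`:
for `x ≥ 0`, `W0 x` is the unique `y ≥ 0` with `y * exp y = x`. -/
noncomputable def W0 (x : ℝ) : ℝ :=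
  Function.invFunOn (fun y : ℝ => y * Real.exp y) (Set.Ici 0) x

lemma fW_strictMono : StrictMonoOn (fun y : ℝ => y * Real.exp y) (Set.Ici 0) := by
  intro a ha b hb hab
  have h1 : Real.exp a < Real.exp b := Real.exp_lt_exp.mpr hab
  have ha' : (0:ℝ) ≤ a := ha
  simp only
  nlinarith [Real.exp_pos a, Real.exp_pos b]

lemma W0_exists (x : ℝ) (hx : 0 ≤ x) : ∃ y ∈ Set.Ici (0:ℝ), y * Real.exp y = x := by
  have hcont : ContinuousOn (fun y : ℝ => y * Real.exp y) (Set.Icc 0 x) :=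
    (continuous_id.mul Real.continuous_exp).continuousOn
  have hx' : x ≤ x * Real.exp x := by
    have : 1 ≤ Real.exp x := Real.one_le_exp hx
    nlinarith
  have hmem : x ∈ Set.Icc ((fun y : ℝ => y * Real.exp y) 0) ((fun y : ℝ => y * Real.exp y) x) := by
    constructor <;> simp [hx, hx']
  obtain ⟨y, hy, hyx⟩ := intermediate_value_Icc hx hcont hmem
  exact ⟨y, hy.1, hyx⟩

lemma W0_spec (x : ℝ) (hx : 0 ≤ x) : 0 ≤ W0 x ∧ W0 x * Real.exp (W0 x) = x := by
  obtain ⟨y, hy, hyx⟩ := W0_exists x hx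
  have hex : ∃ a ∈ Set.Ici (0:ℝ), (fun y : ℝ => y * Real.exp y) a = x := ⟨y, hy, hyx⟩
  exact ⟨Function.invFunOn_mem hex, Function.invFunOn_eq hex⟩

lemma W0_strictMono : StrictMonoOn W0 (Set.Ici 0) := by
  intro x hx y hy hxy
  have hx' : (0:ℝ) ≤ x := hx
  have hy' : (0:ℝ) ≤ y := hy
  obtain ⟨hWx, hWx'⟩ := W0_spec x hx'
  obtain ⟨hWy, hWy'⟩ := W0_spec y hy'
  have : (fun y : ℝ => y * Real.exp y) (W0 x) < (fun y : ℝ => y * Real.exp y) (W0 y) := by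
    simpa [hWx', hWy'] using hxy
  exact (fW_strictMono.lt_iff_lt hWx hWy).mp this

lemma W0_zero : W0 0 = 0 := by
  obtain ⟨h0, h1⟩ := W0_spec 0 le_rfl
  rcases eq_or_lt_of_le h0 with h | h
  · exact h.symm
  · nlinarith [Real.exp_pos (W0 0)]

lemma W0_pos (x : ℝ) (hx : 0 < x) : 0 < W0 x := by
  obtain ⟨h0, h1⟩ := W0_spec x hx.le
  rcases eq_or_lt_of_le h0 with h | h
  · exfalso; rw [← h] at h1; simp at h1; linarith
  · exact h

theorem W0_mono_and_eh_current_lipschitz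
    (Is VT R : ℝ) (hIs : 0 < Is) (hVT : 0 < VT) (hR : 0 < R) :
    StrictMonoOn W0 (Set.Ici 0) ∧ W0 0 = 0 ∧
    (∀ j₁ j₂ : ℝ, 0 ≤ j₁ → 0 ≤ j₂ →
      |(j₁ + Is - (VT / R) * W0 ((Is * R / VT) * Real.exp ((R / VT) * (j₁ + Is)))) -
        (j₂ + Is - (VT / R) * W0 ((Is * R / VT) * Real.exp ((R / VT) * (j₂ + Is))))| ≤
      |j₁ - j₂|) := by
  refine ⟨W0_strictMono, W0_zero, ?_⟩
  have hc : 0 < Is * R / VT := by positivity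
  -- key: for j ≥ 0, let w j = W0 (c * exp (k*(j+Is))); then log w + w = log c + k*(j+Is)
  have key : ∀ j : ℝ, 0 ≤ j →
      Real.log (W0 ((Is * R / VT) * Real.exp ((R / VT) * (j + Is)))) +
        W0 ((Is * R / VT) * Real.exp ((R / VT) * (j + Is))) =
      Real.log (Is * R / VT) + (R / VT) * (j + Is) := by
    intro j hj
    set x := (Is * R / VT) * Real.exp ((R / VT) * (j + Is)) with hxdef
    have hxpos : 0 < x := by positivity
    obtain ⟨hw0, hw1⟩ := W0_spec x hxpos.le
    have hwpos : 0 < W0 x := W0_pos x hxpos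
    have := congrArg Real.log hw1
    rw [Real.log_mul (ne_of_gt hwpos) (Real.exp_ne_zero _), Real.log_exp] at this
    rw [this, hxdef, Real.log_mul (ne_of_gt hc) (Real.exp_ne_zero _), Real.log_exp]
  -- monotone + 1-Lipschitz on one side
  have main : ∀ j₁ j₂ : ℝ, 0 ≤ j₁ → 0 ≤ j₂ → j₂ ≤ j₁ →
      0 ≤ (j₁ + Is - (VT / R) * W0 ((Is * R / VT) * Real.exp ((R / VT) * (j₁ + Is)))) -
        (j₂ + Is - (VT / R) * W0 ((Is * R / VT) * Real.exp ((R / VT) * (j₂ + Is)))) ∧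
      (j₁ + Is - (VT / R) * W0 ((Is * R / VT) * Real.exp ((R / VT) * (j₁ + Is)))) -
        (j₂ + Is - (VT / R) * W0 ((Is * R / VT) * Real.exp ((R / VT) * (j₂ + Is)))) ≤ j₁ - j₂ := by
    intro j₁ j₂ h1 h2 hle
    set x₁ := (Is * R / VT) * Real.exp ((R / VT) * (j₁ + Is)) with hx1
    set x₂ := (Is * R / VT) * Real.exp ((R / VT) * (j₂ + Is)) with hx2
    have hx1pos : 0 < x₁ := by positivity
    have hx2pos : 0 < x₂ := by positivity
    have hxle : x₂ ≤ x₁ := by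
      apply mul_le_mul_of_nonneg_left _ hc.le
      exact Real.exp_le_exp.mpr (by nlinarith [div_pos hR hVT])
    have hwle : W0 x₂ ≤ W0 x₁ := by
      rcases eq_or_lt_of_le hxle with h | h
      · rw [h]
      · exact (W0_strictMono hx2pos.le hx1pos.le h).le
    have hw2pos : 0 < W0 x₂ := W0_pos x₂ hx2pos
    have hlogle : Real.log (W0 x₂) ≤ Real.log (W0 x₁) :=
      Real.log_le_log hw2pos hwle
    have k1 := key j₁ h1
    have k2 := key j₂ h2
    rw [← hx1] at k1
    rw [← hx2] at k2
    -- subtract: log w₁ - log w₂ + w₁ - w₂ = k (j₁ - j₂)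
    have hdiff : Real.log (W0 x₁) - Real.log (W0 x₂) + (W0 x₁ - W0 x₂)
        = (R / VT) * (j₁ - j₂) := by linarith
    have hVR : (VT / R) * (R / VT) = 1 := by field_simp
    constructor
    · nlinarith [div_pos hVT hR]
    · nlinarith [div_pos hVT hR]
  intro j₁ j₂ h1 h2
  rcases le_total j₂ j₁ with h | h
  · obtain ⟨ha, hb⟩ := main j₁ j₂ h1 h2 h
    rw [abs_of_nonneg ha, abs_of_nonneg (by linarith : (0:ℝ) ≤ j₁ - j₂)]
    exact hb
  · obtain ⟨ha, hb⟩ := main j₂ j₁ h2 h1 h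
    rw [abs_sub_comm, abs_sub_comm j₁ j₂, abs_of_nonneg ha,
      abs_of_nonneg (by linarith : (0:ℝ) ≤ j₂ - j₁)]
    exact hb
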